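/- arXiv:1510.08493 — 3 statements merged into one kernel-verified Lean document; each statement's English description precedes it below -/
import Mathlib

section
/- Let A_n be the two-generator Artin group with odd exponent n ≥ 3, let Δ = (aba⋯)_n, and in the index-two subgroup A_n' of even-length words set r = ab, s = ab⁻¹, t = a⁻¹b, q = ba. Then conjugation by Δ sends s ↦ s⁻¹, t ↦ t⁻¹, and r ↦ q; in particular Δ² is central in A_n. -/
/-- The alternating product `x y x y ⋯` of length `n`. -/
def altG {G : Type*} [Monoid G] : ℕ → G → G → G
  | 0, _, _ => 1
  | n + 1, x, y => x * altG n y x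

lemma map_altG {M N : Type*} [Monoid M] [Monoid N] (f : M →* N) :
    ∀ (n : ℕ) (x y : M), f (altG n x y) = altG n (f x) (f y)
  | 0, _, _ => by simp [altG]
  | n + 1, x, y => by simp [altG, map_altG f n]

/-- The braid relation of the two-generator Artin group with exponent `n`. -/
def braidRels (n : ℕ) : Set (FreeGroup Bool) :=
  {altG n (FreeGroup.of true) (FreeGroup.of false) *
    (altG n (FreeGroup.of false) (FreeGroup.of true))⁻¹}

/-- The two-generator Artin group `A_n`. -/
abbrev ArtinTwo (n : ℕ) := PresentedGroup (braidRels n)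

/-- The generator `a`. -/
def artinA (n : ℕ) : ArtinTwo n := PresentedGroup.of true

/-- The generator `b`. -/
def artinB (n : ℕ) : ArtinTwo n := PresentedGroup.of false

/-- The Garside element `Δ = (aba⋯)_n`. -/
def artinDelta (n : ℕ) : ArtinTwo n := altG n (artinA n) (artinB n)

/-- The homomorphism `A_n → ℤ/2` sending both generators to `1`. -/
def toZ2 (n : ℕ) : ArtinTwo n →* Multiplicative (ZMod 2) :=
  PresentedGroup.toGroup (f := fun _ => Multiplicative.ofAdd 1) (by
    intro r hr
    simp only [braidRels, Set.mem_singleton_iff] at hr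
    subst hr
    simp [map_altG])

/-- The index-two subgroup `A_n'` of even-length words. -/
def AnPrime (n : ℕ) : Subgroup (ArtinTwo n) := (toZ2 n).ker

/-! For odd `n` the braid relation says that `a Δ = Δ b` and `b Δ = Δ a`: conjugation by `Δ`
swaps the generators, which gives the three formulas at once, and `Δ²` commutes with both
generators, hence is central. -/

theorem altG_add_two {G : Type*} [Monoid G] (n : ℕ) (x y : G) :
    altG (n + 2) x y = x * y * altG n x y := by
  simp only [altG, mul_assoc]

theorem mul_altG_of_odd {G : Type*} [Monoid G] {n : ℕ} (hn : Odd n) (x y : G) :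
    x * altG n y x = altG n x y * y := by
  obtain ⟨k, rfl⟩ := hn
  induction k with
  | zero => simp [altG]
  | succ k ih =>
    rw [show 2 * (k + 1) + 1 = 2 * k + 1 + 2 by ring, altG_add_two, altG_add_two,
      mul_assoc (x * y), ← ih]
    simp only [mul_assoc]

theorem PresentedGroup.commute_of_forall_commute_of {α : Type*} {rels : Set (FreeGroup α)}
    {z : PresentedGroup rels} (hz : ∀ j, Commute z (PresentedGroup.of j))
    (g : PresentedGroup rels) : Commute z g := by
  have hmem := PresentedGroup.generated_by rels (Subgroup.centralizer {z})
    (fun j => Subgroup.mem_centralizer_singleton_iff.mpr (hz j).symm) g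
  exact (Subgroup.mem_centralizer_singleton_iff.mp hmem).symm

theorem altG_artinA_artinB (n : ℕ) :
    altG n (artinA n) (artinB n) = altG n (artinB n) (artinA n) := by
  have h := PresentedGroup.mk_eq_mk_of_mul_inv_mem (rels := braidRels n) (Set.mem_singleton _)
  rwa [map_altG, map_altG] at h

section Odd

variable {n : ℕ}

theorem artinA_mul_artinDelta (hn : Odd n) :
    artinA n * artinDelta n = artinDelta n * artinB n := by
  rw [artinDelta, ← mul_altG_of_odd hn, altG_artinA_artinB]

theorem artinB_mul_artinDelta (hn : Odd n) :
    artinB n * artinDelta n = artinDelta n * artinA n := by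
  rw [artinDelta, mul_altG_of_odd hn, altG_artinA_artinB]

theorem artinDelta_inv_mul_artinA_mul (hn : Odd n) :
    (artinDelta n)⁻¹ * artinA n * artinDelta n = artinB n := by
  rw [mul_assoc, artinA_mul_artinDelta hn, inv_mul_cancel_left]

theorem artinDelta_inv_mul_artinB_mul (hn : Odd n) :
    (artinDelta n)⁻¹ * artinB n * artinDelta n = artinA n := by
  rw [mul_assoc, artinB_mul_artinDelta hn, inv_mul_cancel_left]

theorem commute_artinDelta_sq (hn : Odd n) (g : ArtinTwo n) : Commute (artinDelta n ^ 2) g := by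
  refine PresentedGroup.commute_of_forall_commute_of (fun j => ?_) g
  rw [sq]
  cases j
  · exact SemiconjBy.mul_left (artinB_mul_artinDelta hn).symm (artinA_mul_artinDelta hn).symm
  · exact SemiconjBy.mul_left (artinA_mul_artinDelta hn).symm (artinB_mul_artinDelta hn).symm

end Odd

theorem artin_odd_delta_conjugation_general (n : ℕ) (hodd : Odd n) :
    (artinDelta n)⁻¹ * (artinA n * (artinB n)⁻¹) * artinDelta n
        = (artinA n * (artinB n)⁻¹)⁻¹ ∧
    (artinDelta n)⁻¹ * ((artinA n)⁻¹ * artinB n) * artinDelta n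
        = ((artinA n)⁻¹ * artinB n)⁻¹ ∧
    (artinDelta n)⁻¹ * (artinA n * artinB n) * artinDelta n = artinB n * artinA n ∧
    ∀ g : ArtinTwo n, (artinDelta n) ^ 2 * g = g * (artinDelta n) ^ 2 := by
  set Δ := artinDelta n
  have conj_mul (x y : ArtinTwo n) : Δ⁻¹ * (x * y) * Δ = (Δ⁻¹ * x * Δ) * (Δ⁻¹ * y * Δ) := by
    group
  have conj_inv (x : ArtinTwo n) : Δ⁻¹ * x⁻¹ * Δ = (Δ⁻¹ * x * Δ)⁻¹ := by group
  have ha := artinDelta_inv_mul_artinA_mul hodd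
  have hb := artinDelta_inv_mul_artinB_mul hodd
  refine ⟨?_, ?_, ?_, fun g => commute_artinDelta_sq hodd g⟩
  · rw [conj_mul, conj_inv, ha, hb, mul_inv_rev, inv_inv]
  · rw [conj_mul, conj_inv, ha, hb, mul_inv_rev, inv_inv]
  · rw [conj_mul, ha, hb]

/-- for odd `n`, conjugation by `Δ` sends `s ↦ s⁻¹`, `t ↦ t⁻¹`, `r ↦ q`,
and in particular `Δ²` is central. -/
theorem artin_odd_delta_conjugation (n : ℕ) (hodd : Odd n) (hn : 3 ≤ n) :
    (artinDelta n)⁻¹ * (artinA n * (artinB n)⁻¹) * artinDelta n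
        = (artinA n * (artinB n)⁻¹)⁻¹ ∧
    (artinDelta n)⁻¹ * ((artinA n)⁻¹ * artinB n) * artinDelta n
        = ((artinA n)⁻¹ * artinB n)⁻¹ ∧
    (artinDelta n)⁻¹ * (artinA n * artinB n) * artinDelta n = artinB n * artinA n ∧
    ∀ g : ArtinTwo n, (artinDelta n) ^ 2 * g = g * (artinDelta n) ^ 2 :=
  artin_odd_delta_conjugation_general n hodd
end

section
/- Let G be a finitely generated group, z ∈ G a central element, H a finite-index normal subgroup of G, and h ∈ H with h ∈ z[G,G]. Then for any homomorphism ρ: H → ℤ with ρ nontrivial on ⟨z⟩ ∩ H, there exist a positive integer m and g ∈ G such that g⁻¹ h^m g ∈ H and ρ(g⁻¹ h^m g) ≠ 0. -/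
/-!
The transfer `G →* ℤ` of `ρ` does the work. It kills commutators, so it agrees on `h` and on `z`;
on the central element `z` it is `ρ (z ^ [G : H])`, which is nonzero because `ℤ` is torsion-free
and `ρ` is nonzero on some power of `z` in `H`. Finally, the transfer of `h` is the sum, over the
`⟨h⟩`-orbits on `G ⧸ H`, of values of `ρ` on conjugates `g⁻¹ h ^ m g ∈ H` with `m` the orbit
length, so one of these values is nonzero.
-/

open Subgroup

theorem Subgroup.conj_pow_eq_of_mem_center {G : Type*} [Group G] {z : G} (hz : z ∈ center G)
    (k : ℕ) (g : G) : g⁻¹ * z ^ k * g = z ^ k := by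
  rw [mem_center_iff.mp (pow_mem hz k) g⁻¹, inv_mul_cancel_right]

theorem Subgroup.pow_index_mem_of_mem_center {G : Type*} [Group G] (H : Subgroup G) {z : G}
    (hz : z ∈ center G) : z ^ H.index ∈ H :=
  MonoidHom.transfer_eq_pow_aux z fun k g _ => conj_pow_eq_of_mem_center hz k g

namespace MonoidHom

variable {G A : Type*} [Group G] [CommGroup A]

theorem eq_of_mul_inv_mem_commutator (f : G →* A) {g z : G} (hgz : g * z⁻¹ ∈ commutator G) :
    f g = f z := by
  have := Abelianization.commutator_subset_ker f hgz
  rwa [mem_ker, map_mul, map_inv, mul_inv_eq_one] at this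

variable {H : Subgroup G} (ϕ : H →* A)

theorem transfer_eq_of_mem_center [H.FiniteIndex] {z : G} (hz : z ∈ center G) :
    transfer ϕ z = ϕ ⟨z ^ H.index, H.pow_index_mem_of_mem_center hz⟩ :=
  transfer_eq_pow ϕ z fun k g _ => conj_pow_eq_of_mem_center hz k g

theorem apply_pow_ne_one_of_apply_zpow_ne_one [IsMulTorsionFree A] {z : G} {n : ℕ} (hn : n ≠ 0)
    (hzn : z ^ n ∈ H) {m : ℤ} (hzm : z ^ m ∈ H) (hϕ : ϕ ⟨z ^ m, hzm⟩ ≠ 1) :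
    ϕ ⟨z ^ n, hzn⟩ ≠ 1 := by
  intro hϕn
  have hpow : (⟨z ^ m, hzm⟩ : H) ^ n = (⟨z ^ n, hzn⟩ : H) ^ m := by
    ext
    simp only [SubgroupClass.coe_zpow, ← zpow_natCast, ← zpow_mul, mul_comm]
  have : ϕ ⟨z ^ m, hzm⟩ ^ n = 1 := by rw [← map_pow, hpow, map_zpow, hϕn, one_zpow]
  exact hϕ ((pow_eq_one_iff_left hn).mp this)

theorem exists_conj_pow_apply_ne_one_of_transfer_ne_one [H.FiniteIndex] {g : G}
    (hg : transfer ϕ g ≠ 1) :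
    ∃ m : ℕ, 0 < m ∧ ∃ (x : G) (hmem : x⁻¹ * g ^ m * x ∈ H), ϕ ⟨x⁻¹ * g ^ m * x, hmem⟩ ≠ 1 := by
  classical
  let := H.fintypeQuotientOfFiniteIndex
  rw [transfer_eq_prod_quotient_orbitRel_zpowers_quot] at hg
  obtain ⟨q, -, hq⟩ := Finset.exists_ne_one_of_prod_ne_one hg
  refine ⟨_, Nat.pos_of_ne_zero fun h0 => hq ?_, _, _, hq⟩
  simp only [h0, pow_zero, mul_one, inv_mul_cancel]
  exact map_one ϕ

end MonoidHom

theorem surface_lemma_general {G : Type*} [Group G]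
    (z : G) (hz : z ∈ Subgroup.center G)
    (H : Subgroup G) (hfi : H.FiniteIndex)
    (h : G) (hcomm : h * z⁻¹ ∈ commutator G)
    (ρ : H →* Multiplicative ℤ)
    (hρ : ∃ (m : ℤ) (hm : z ^ m ∈ H), ρ ⟨z ^ m, hm⟩ ≠ 1) :
    ∃ m : ℕ, 0 < m ∧ ∃ (g : G) (hmem : g⁻¹ * h ^ m * g ∈ H),
      ρ ⟨g⁻¹ * h ^ m * g, hmem⟩ ≠ 1 := by
  obtain ⟨m, hzm, hρm⟩ := hρ
  apply ρ.exists_conj_pow_apply_ne_one_of_transfer_ne_one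
  rw [ρ.transfer.eq_of_mul_inv_mem_commutator hcomm, ρ.transfer_eq_of_mem_center hz]
  exact ρ.apply_pow_ne_one_of_apply_zpow_ne_one hfi.index_ne_zero _ hzm hρm

/-- Surface Lemma: let `G` be a finitely generated group, `z ∈ G` central,
`H ⊴ G` of finite index, and `h ∈ H` with `h z⁻¹ ∈ [G,G]`. Then for any homomorphism
`ρ : H → ℤ` nontrivial on `⟨z⟩ ∩ H` there are `m > 0` and `g ∈ G` with `g⁻¹ h^m g ∈ H`
and `ρ(g⁻¹ h^m g) ≠ 0`. -/
theorem surface_lemma {G : Type*} [Group G] (hfg : Group.FG G)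
    (z : G) (hz : z ∈ Subgroup.center G)
    (H : Subgroup G) [H.Normal] (hfi : H.FiniteIndex)
    (h : G) (hhH : h ∈ H) (hcomm : h * z⁻¹ ∈ commutator G)
    (ρ : H →* Multiplicative ℤ)
    (hρ : ∃ (m : ℤ) (hm : z ^ m ∈ H), ρ ⟨z ^ m, hm⟩ ≠ 1) :
    ∃ m : ℕ, 0 < m ∧ ∃ (g : G) (hmem : g⁻¹ * h ^ m * g ∈ H),
      ρ ⟨g⁻¹ * h ^ m * g, hmem⟩ ≠ 1 :=
  surface_lemma_general z hz H hfi h hcomm ρ hρ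
end

section
/- In the braid group B₃ = ⟨a, b | aba = bab⟩, every element can be written as Δ⁻ᵏ φ(a,b) where Δ = aba, k ≥ 0, and φ is a positive word in a, b (a product of nonnegative powers of a and b). -/
/-!
Conjugation by `Δ = aba` swaps `a` and `b`, so a positive word can be moved from the right of
`Δ⁻¹` to its left, staying positive. Hence the elements `Δ⁻ᵏ φ` with `φ` positive form a
submonoid; it contains `a`, `b`, and also `a⁻¹ = Δ⁻¹ ab` and `b⁻¹ = Δ⁻¹ ba`, so it is the
whole group.
-/

namespace Submonoid

variable {G : Type*} [Group G] {M : Submonoid G} {d : G}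

theorem conj_pow_mem_of_conj_mem (hM : ∀ m ∈ M, d * m * d⁻¹ ∈ M) (k : ℕ) {m : G}
    (hm : m ∈ M) : d ^ k * m * (d ^ k)⁻¹ ∈ M := by
  induction k with
  | zero => simpa using hm
  | succ k ih => simpa [pow_succ', mul_assoc] using hM _ ih

theorem exists_inv_pow_mul_of_mul (hM : ∀ m ∈ M, d * m * d⁻¹ ∈ M) {k l : ℕ} {m n : G}
    (hm : m ∈ M) (hn : n ∈ M) :
    ∃ j : ℕ, ∃ p ∈ M, (d ^ k)⁻¹ * m * ((d ^ l)⁻¹ * n) = (d ^ j)⁻¹ * p := by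
  refine ⟨l + k, d ^ l * m * (d ^ l)⁻¹ * n,
    mul_mem (conj_pow_mem_of_conj_mem hM l hm) hn, ?_⟩
  rw [pow_add]
  group

theorem exists_inv_pow_mul_of_closure_eq_top {s : Set G} (hs : Subgroup.closure s = ⊤)
    (hsM : s ⊆ M) (hM : ∀ m ∈ M, d * m * d⁻¹ ∈ M) (hinv : ∀ x ∈ s, ∃ m ∈ M, x⁻¹ = d⁻¹ * m)
    (g : G) : ∃ k : ℕ, ∃ m ∈ M, g = (d ^ k)⁻¹ * m := by
  have hg : g ∈ Subgroup.closure s := hs ▸ Subgroup.mem_top g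
  induction hg using Subgroup.closure_induction'' with
  | mem x hx => exact ⟨0, x, hsM hx, by simp⟩
  | inv_mem x hx =>
    obtain ⟨m, hm, hx⟩ := hinv x hx
    exact ⟨1, m, hm, by rw [hx, pow_one]⟩
  | one => exact ⟨0, 1, M.one_mem, by simp⟩
  | mul x y _ _ hx hy =>
    obtain ⟨k, m, hm, rfl⟩ := hx
    obtain ⟨l, n, hn, rfl⟩ := hy
    exact exists_inv_pow_mul_of_mul hM hm hn

end Submonoid

namespace Braid3

local notation "a" => artinA 3
local notation "b" => artinB 3
local notation "Δ" => artinDelta 3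
local notation "M" => Submonoid.closure ({artinA 3, artinB 3} : Set (ArtinTwo 3))

theorem braid_rel : a * b * a = b * a * b := by
  have h : PresentedGroup.mk (braidRels 3)
      (altG 3 (FreeGroup.of true) (FreeGroup.of false) *
        (altG 3 (FreeGroup.of false) (FreeGroup.of true))⁻¹) = 1 :=
    (QuotientGroup.eq_one_iff _).mpr (Subgroup.subset_normalClosure rfl)
  rw [map_mul, map_inv, map_altG, map_altG, mul_inv_eq_one] at h
  simpa [altG, artinA, artinB, PresentedGroup.of, mul_assoc] using h

theorem delta_eq : Δ = a * b * a := by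
  simp [artinDelta, altG, mul_assoc]

theorem delta_mul_a_mul_delta_inv : Δ * a * Δ⁻¹ = b := by
  rw [mul_inv_eq_iff_eq_mul, delta_eq]
  conv_lhs => rw [braid_rel]
  group

theorem delta_mul_b_mul_delta_inv : Δ * b * Δ⁻¹ = a := by
  rw [mul_inv_eq_iff_eq_mul, delta_eq]
  conv_rhs => rw [braid_rel]
  group

theorem a_inv_eq : a⁻¹ = Δ⁻¹ * (a * b) := by
  rw [delta_eq]
  group

theorem b_inv_eq : b⁻¹ = Δ⁻¹ * (b * a) := by
  rw [delta_eq, braid_rel]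
  group

theorem a_mem : a ∈ M := Submonoid.subset_closure (by simp)

theorem b_mem : b ∈ M := Submonoid.subset_closure (by simp)

theorem delta_conj_mem {m : ArtinTwo 3} (hm : m ∈ M) : Δ * m * Δ⁻¹ ∈ M := by
  induction hm using Submonoid.closure_induction with
  | mem x hx =>
    rcases hx with rfl | rfl
    · exact delta_mul_a_mul_delta_inv ▸ b_mem
    · exact delta_mul_b_mul_delta_inv ▸ a_mem
  | one => simp
  | mul x y _ _ hx hy =>
    have h : Δ * (x * y) * Δ⁻¹ = Δ * x * Δ⁻¹ * (Δ * y * Δ⁻¹) := by group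
    exact h ▸ mul_mem hx hy

end Braid3

/-- in the braid group `B₃ = ⟨a,b | aba = bab⟩`, every element can be
written as `Δ⁻ᵏ φ` with `k ≥ 0` and `φ` a positive word in `a, b`. -/
theorem braid3_deligne_normal_form (g : ArtinTwo 3) :
    ∃ (k : ℕ) (φ : ArtinTwo 3),
      φ ∈ Submonoid.closure ({artinA 3, artinB 3} : Set (ArtinTwo 3)) ∧
      g = ((artinDelta 3) ^ k)⁻¹ * φ := by
  refine Submonoid.exists_inv_pow_mul_of_closure_eq_top
    (PresentedGroup.closure_range_of _) ?_ (fun _ => Braid3.delta_conj_mem) ?_ g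
  · rintro _ ⟨_ | _, rfl⟩
    exacts [Braid3.b_mem, Braid3.a_mem]
  · open Braid3 in
    rintro _ ⟨_ | _, rfl⟩
    exacts [⟨_, mul_mem b_mem a_mem, b_inv_eq⟩, ⟨_, mul_mem a_mem b_mem, a_inv_eq⟩]
end
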